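/- Let P ∈ ℍ[X] have degree d ≥ 2. Then every root x ∈ V(P') of the derivative satisfies |x| ≤ sup_{I∈S} C(P^I), where for each imaginary unit I the quantity C(P^I) equals |b_e|⁻¹ √(∑_{k=0}^e |b_k|²) if P^I(X) = ∑_{k=0}^e X^k b_k has degree e ≥ 1 with b_e ≠ 0, and C(P^I) = +∞ if P^I is constant. -/

import Mathlib

open Polynomial
open scoped Classical RealInnerProductSpace ENNReal

noncomputable section

abbrev Hq : Type := Quaternion ℝ

/-- Right evaluation of a quaternionic polynomial: `P(x) = ∑ x^k * a_k`. -/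
def evalQ (P : Hq[X]) (x : Hq) : Hq := P.sum fun k a => x ^ k * a

/-- Zero set of a quaternionic polynomial (w.r.t. right evaluation). -/
def VQ (P : Hq[X]) : Set Hq := {x | evalQ P x = 0}

/-- Conjugate polynomial: coefficients conjugated. -/
def conjPoly (P : Hq[X]) : Hq[X] := P.sum fun k a => C (star a) * X ^ k

/-- Normal polynomial `N(P) = P * Pᶜ`. -/
def normalPoly (P : Hq[X]) : Hq[X] := P * conjPoly P

/-- The conjugacy sphere `S_x = {p x p⁻¹ : p ≠ 0}`. -/
def sphereOf (x : Hq) : Set Hq := {y | ∃ p : Hq, p ≠ 0 ∧ y = p * x * p⁻¹}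

/-- `P` is a Gauss-Lucas polynomial: `V(P') ⊆ K(N(P))`. -/
def GaussLucas (P : Hq[X]) : Prop :=
  VQ (derivative P) ⊆ convexHull ℝ (VQ (normalPoly P))

/-- The sphere of imaginary units. -/
def sphereS : Set Hq := {I | I ^ 2 = -1}

/-- The complex plane `C_I = ℝ + ℝI`. -/
def Cplane (I : Hq) : Set Hq := {x | ∃ a b : ℝ, x = algebraMap ℝ Hq a + b • I}

/-- Orthogonal projection onto `C_I`: `π_I(a) = ⟪a,1⟫•1 + ⟪a,I⟫•I`. -/
def piProj (I a : Hq) : Hq := (@inner ℝ Hq _ a (1 : Hq)) • (1 : Hq) + (@inner ℝ Hq _ a I) • I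

/-- The polynomial `P^I` with coefficients projected onto `C_I`. -/
def projPoly (I : Hq) (P : Hq[X]) : Hq[X] := P.sum fun k a => C (piProj I a) * X ^ k

/-- `K_{C_I}(Q)`: the convex hull in `C_I` of `V(Q) ∩ C_I` if the restriction of `Q`
to `C_I` is nonconstant, and `C_I` itself otherwise. -/
def KC (I : Hq) (Q : Hq[X]) : Set Hq :=
  if ∃ c, ∀ x ∈ Cplane I, evalQ Q x = c then Cplane I
  else convexHull ℝ (VQ Q ∩ Cplane I)

/-- The Gauss-Lucas snail `sn(P) = ⋃_{I ∈ S} K_{C_I}(P^I)`. -/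
def snail (P : Hq[X]) : Set Hq := ⋃ I ∈ sphereS, KC I (projPoly I P)

/-- The Cauchy bound `C(P) = |a_d|⁻¹ √(∑ |a_k|²)`. -/
def CQ (P : Hq[X]) : ℝ :=
  ‖P.leadingCoeff‖⁻¹ * Real.sqrt (∑ k ∈ Finset.range (P.natDegree + 1), ‖P.coeff k‖ ^ 2)

/-- Extended Cauchy bound, `+∞` on constant polynomials. -/
def CExt (P : Hq[X]) : ℝ≥0∞ :=
  if P.natDegree = 0 then ⊤ else ENNReal.ofReal (CQ P)

def qi : Hq := ⟨0, 1, 0, 0⟩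
def qj : Hq := ⟨0, 0, 1, 0⟩
def qk : Hq := ⟨0, 0, 0, 1⟩

/-- Polynomial with coefficient tuple `a`. -/
def polyOf {n : ℕ} (a : Fin (n + 1) → Hq) : Hq[X] :=
  ∑ k : Fin (n + 1), C (a k) * X ^ (k : ℕ)

lemma re_mul_comm (a b : Hq) : (a * b).re = (b * a).re := by
  simp only [Quaternion.re_mul]; ring

lemma sphereS_re {I : Hq} (hI : I ∈ sphereS) : I.re = 0 := by
  have h : I * I = -1 := by rw [← sq]; exact hI
  rw [Quaternion.ext_iff] at h
  obtain ⟨h1, h2, h3, h4⟩ := h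
  simp only [Quaternion.re_mul, Quaternion.imI_mul, Quaternion.imJ_mul, Quaternion.imK_mul,
    Quaternion.re_neg, Quaternion.imI_neg, Quaternion.imJ_neg, Quaternion.imK_neg,
    Quaternion.re_one, Quaternion.imI_one, Quaternion.imJ_one, Quaternion.imK_one,
    neg_zero] at h1 h2 h3 h4
  have key : I.re ^ 2 * (I.re ^ 2 + 1) = 0 := by
    linear_combination (I.re ^ 2) * h1 + (I.re * I.imI / 2) * h2 + (I.re * I.imJ / 2) * h3 +
      (I.re * I.imK / 2) * h4
  have h5 : I.re ^ 2 = 0 := by nlinarith [sq_nonneg I.re]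
  exact pow_eq_zero_iff two_ne_zero |>.mp h5

lemma sphereS_star {I : Hq} (hI : I ∈ sphereS) : star I = -I := by
  rw [Quaternion.star_eq_two_re_sub, sphereS_re hI]
  simp

lemma sphereS_mul_self {I : Hq} (hI : I ∈ sphereS) : I * I = -1 := by
  rw [← sq]; exact hI

lemma piProj_eq {I : Hq} (hI : I ∈ sphereS) (a : Hq) :
    piProj I a = a.re • (1 : Hq) + (-((a * I).re)) • I := by
  rw [piProj, Quaternion.inner_def, Quaternion.inner_def, star_one, mul_one, sphereS_star hI]
  rw [mul_neg, Quaternion.re_neg]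

lemma piProj_add (I a b : Hq) : piProj I (a + b) = piProj I a + piProj I b := by
  simp only [piProj, inner_add_left, add_smul]; abel

lemma piProj_smul (I : Hq) (r : ℝ) (a : Hq) : piProj I (r • a) = r • piProj I a := by
  simp only [piProj, real_inner_smul_left, smul_add, smul_smul]

lemma piProj_zero (I : Hq) : piProj I 0 = 0 := by
  simp [piProj]

lemma piProj_I_mul {I : Hq} (hI : I ∈ sphereS) (a : Hq) :
    piProj I (I * a) = I * piProj I a := by
  have h1 : (I * a).re = (a * I).re := re_mul_comm _ _
  have h2 : (I * a * I).re = -a.re := by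
    rw [mul_assoc, re_mul_comm, mul_assoc, sphereS_mul_self hI]
    simp
  rw [piProj_eq hI, piProj_eq hI, h1, h2, neg_neg]
  rw [mul_add, mul_smul_comm, mul_smul_comm, mul_one, sphereS_mul_self hI]
  rw [smul_neg, ← neg_smul]
  module

lemma piProj_mul {I : Hq} (hI : I ∈ sphereS) {x : Hq} (hx : x ∈ Cplane I) (a : Hq) :
    piProj I (x * a) = x * piProj I a := by
  obtain ⟨r, s, rfl⟩ := hx
  have h1 : (algebraMap ℝ Hq r + s • I) * a = r • a + s • (I * a) := by
    simp [add_mul, smul_mul_assoc, Algebra.smul_def, mul_assoc]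
  rw [h1, piProj_add, piProj_smul, piProj_smul, piProj_I_mul hI, add_mul,
    smul_mul_assoc, Algebra.smul_def]

lemma Cplane_one (I : Hq) : (1 : Hq) ∈ Cplane I := ⟨1, 0, by simp⟩

lemma Cplane_mul {I : Hq} (hI : I ∈ sphereS) {x y : Hq} (hx : x ∈ Cplane I)
    (hy : y ∈ Cplane I) : x * y ∈ Cplane I := by
  obtain ⟨r, s, rfl⟩ := hx
  obtain ⟨r', s', rfl⟩ := hy
  refine ⟨r * r' - s * s', r * s' + s * r', ?_⟩
  have hII := sphereS_mul_self hI
  simp only [Algebra.algebraMap_eq_smul_one, add_mul, mul_add, smul_mul_assoc,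
    mul_smul_comm, one_mul, mul_one, smul_smul, hII, smul_neg]
  module

lemma Cplane_pow {I : Hq} (hI : I ∈ sphereS) {x : Hq} (hx : x ∈ Cplane I) (k : ℕ) :
    x ^ k ∈ Cplane I := by
  induction k with
  | zero => simpa using Cplane_one I
  | succ n ih => rw [pow_succ]; exact Cplane_mul hI ih hx

lemma piProj_sum {I : Hq} {ι : Type*} (s : Finset ι) (f : ι → Hq) :
    piProj I (∑ k ∈ s, f k) = ∑ k ∈ s, piProj I (f k) := by
  classical
  induction s using Finset.cons_induction with
  | empty => simp [piProj_zero]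
  | cons a s ha ih => rw [Finset.sum_cons, Finset.sum_cons, piProj_add, ih]

lemma coeff_projPoly (I : Hq) (P : Hq[X]) (n : ℕ) :
    (projPoly I P).coeff n = piProj I (P.coeff n) := by
  rw [projPoly, Polynomial.coeff_sum, Polynomial.sum_def]
  simp only [Polynomial.coeff_C_mul_X_pow]
  rw [Finset.sum_ite_eq (P.support) n (fun k => piProj I (P.coeff k))]
  by_cases h : n ∈ P.support
  · rw [if_pos h]
  · rw [if_neg h, Polynomial.notMem_support_iff.mp h, piProj_zero]

lemma natDegree_projPoly_le (I : Hq) (P : Hq[X]) :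
    (projPoly I P).natDegree ≤ P.natDegree := by
  rw [Polynomial.natDegree_le_iff_coeff_eq_zero]
  intro N hN
  rw [coeff_projPoly, Polynomial.coeff_eq_zero_of_natDegree_lt hN, piProj_zero]

lemma piProj_mul_natCast (I : Hq) (a : Hq) (n : ℕ) :
    piProj I (a * (n : Hq)) = piProj I a * (n : Hq) := by
  have key : ∀ b : Hq, b * (n : Hq) = (n : ℝ) • b := fun b => by
    rw [← Quaternion.coe_natCast, Quaternion.mul_coe_eq_smul]
  rw [key, key, piProj_smul]

lemma derivative_projPoly (I : Hq) (P : Hq[X]) :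
    derivative (projPoly I P) = projPoly I (derivative P) := by
  apply Polynomial.ext
  intro n
  have h := piProj_mul_natCast I (P.coeff (n + 1)) (n + 1)
  push_cast at h
  rw [Polynomial.coeff_derivative, coeff_projPoly, coeff_projPoly, Polynomial.coeff_derivative, h]

lemma evalQ_projPoly {I : Hq} (hI : I ∈ sphereS) {x : Hq} (hx : x ∈ Cplane I) (P : Hq[X]) :
    evalQ (projPoly I P) x = piProj I (evalQ P x) := by
  have h1 : evalQ (projPoly I P) x
      = ∑ k ∈ Finset.range (P.natDegree + 1), x ^ k * (projPoly I P).coeff k := by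
    rw [evalQ]
    exact Polynomial.sum_over_range' (projPoly I P) (fun n => mul_zero _) _
      (Nat.lt_succ_of_le (natDegree_projPoly_le I P))
  have h2 : evalQ P x = ∑ k ∈ Finset.range (P.natDegree + 1), x ^ k * P.coeff k := by
    rw [evalQ]
    exact Polynomial.sum_over_range' P (fun n => mul_zero _) _ (Nat.lt_succ_of_le le_rfl)
  rw [h1, h2, piProj_sum]
  refine Finset.sum_congr rfl fun k _ => ?_
  rw [coeff_projPoly, piProj_mul hI (Cplane_pow hI hx k)]

lemma core (m : ℕ) (t : ℝ) (B : ℕ → ℝ) (hB : ∀ k, 0 ≤ B k) (hbe : 0 < B (m + 1))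
    (ht : 1 < t)
    (h : t ^ m * B (m + 1) ≤ ∑ j ∈ Finset.range m, t ^ j * B (j + 1)) :
    t ≤ (B (m + 1))⁻¹ * Real.sqrt (∑ k ∈ Finset.range (m + 2), B k ^ 2) := by
  set S := ∑ k ∈ Finset.range (m + 2), B k ^ 2 with hS
  have ht0 : 0 < t := by linarith
  have htt : (1 : ℝ) < t ^ 2 := by nlinarith
  have hcs : (∑ j ∈ Finset.range m, t ^ j * B (j + 1)) ^ 2
      ≤ (∑ j ∈ Finset.range m, (t ^ j) ^ 2) * (∑ j ∈ Finset.range m, (B (j + 1)) ^ 2) :=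
    Finset.sum_mul_sq_le_sq_mul_sq _ _ _
  have hgeom : (∑ j ∈ Finset.range m, (t ^ j) ^ 2) ≤ t ^ (2 * m) / (t ^ 2 - 1) := by
    have e1 : ∀ j, (t ^ j) ^ 2 = (t ^ 2) ^ j := fun j => by ring
    simp_rw [e1]
    rw [geom_sum_eq (ne_of_gt htt) m]
    apply (div_le_div_iff_of_pos_right (by linarith : (0:ℝ) < t ^ 2 - 1)).mpr
    rw [pow_mul]
    linarith
  have hsub : (∑ j ∈ Finset.range m, (B (j + 1)) ^ 2) ≤ S - B (m + 1) ^ 2 := by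
    have h1 : ∑ j ∈ Finset.range (m + 1), B (j + 1) ^ 2 + B 0 ^ 2 = S := by
      rw [hS]; exact (Finset.sum_range_succ' (fun k => B k ^ 2) (m + 1)).symm
    have h2 : ∑ j ∈ Finset.range (m + 1), B (j + 1) ^ 2
        = ∑ j ∈ Finset.range m, B (j + 1) ^ 2 + B (m + 1) ^ 2 :=
      Finset.sum_range_succ _ m
    nlinarith [sq_nonneg (B 0)]
  have hsumB : (0:ℝ) ≤ ∑ j ∈ Finset.range m, (B (j + 1)) ^ 2 :=
    Finset.sum_nonneg fun j _ => sq_nonneg _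
  have hgeom0 : (0:ℝ) ≤ ∑ j ∈ Finset.range m, (t ^ j) ^ 2 :=
    Finset.sum_nonneg fun j _ => sq_nonneg _
  have hL : (t ^ m * B (m + 1)) ^ 2 ≤ (t ^ (2 * m) / (t ^ 2 - 1)) * (S - B (m + 1) ^ 2) := by
    calc (t ^ m * B (m + 1)) ^ 2
        ≤ (∑ j ∈ Finset.range m, t ^ j * B (j + 1)) ^ 2 := by
          apply pow_le_pow_left₀ (by positivity) h
      _ ≤ (∑ j ∈ Finset.range m, (t ^ j) ^ 2) * (∑ j ∈ Finset.range m, (B (j + 1)) ^ 2) := hcs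
      _ ≤ (t ^ (2 * m) / (t ^ 2 - 1)) * (S - B (m + 1) ^ 2) := by
          apply mul_le_mul hgeom hsub hsumB
          exact div_nonneg (by positivity) (by linarith)
  have ht2 : (0:ℝ) < t ^ 2 - 1 := by linarith
  rw [div_mul_eq_mul_div, le_div_iff₀ ht2] at hL
  have hp : (0:ℝ) < t ^ (2 * m) := pow_pos ht0 _
  have e2 : (t ^ m) ^ 2 = t ^ (2 * m) := by rw [← pow_mul, Nat.mul_comm]
  have key : B (m + 1) ^ 2 * t ^ 2 ≤ S := by nlinarith [hL, hp, e2]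
  have hsqrt : t * B (m + 1) ≤ Real.sqrt S := by
    have e3 : Real.sqrt ((t * B (m + 1)) ^ 2) = t * B (m + 1) := Real.sqrt_sq (by positivity)
    rw [← e3]
    apply Real.sqrt_le_sqrt
    nlinarith [key]
  calc t = (B (m + 1))⁻¹ * (t * B (m + 1)) := by field_simp
    _ ≤ _ := mul_le_mul_of_nonneg_left hsqrt (inv_nonneg.mpr hbe.le)

lemma norm_natCast_succ_Hq (j : ℕ) : ‖((j : Hq) + 1)‖ = (j : ℝ) + 1 := by
  have h : ((j : Hq) + 1) = (((j : ℝ) + 1 : ℝ) : Hq) := by push_cast; ring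
  rw [h, Quaternion.norm_coe, Real.norm_eq_abs, abs_of_nonneg (by positivity)]

lemma root_bound (Q : Hq[X]) (hQ : Q.natDegree ≠ 0) {x : Hq}
    (hx : evalQ (derivative Q) x = 0) : ‖x‖ ≤ CQ Q := by
  obtain ⟨m, hm⟩ : ∃ m, Q.natDegree = m + 1 :=
    ⟨Q.natDegree - 1, (Nat.succ_pred_eq_of_ne_zero hQ).symm⟩
  have hQ0 : Q ≠ 0 := fun h => hQ (by simp [h])
  have hlc : Q.coeff (m + 1) ≠ 0 := by
    rw [← hm]
    exact Polynomial.leadingCoeff_ne_zero.mpr hQ0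
  set B : ℕ → ℝ := fun k => ‖Q.coeff k‖ with hB
  have hbe : 0 < B (m + 1) := norm_pos_iff.mpr hlc
  have hCQ : CQ Q = (B (m + 1))⁻¹ * Real.sqrt (∑ k ∈ Finset.range (m + 2), B k ^ 2) := by
    rw [CQ, Polynomial.leadingCoeff, hm]
  have hone : 1 ≤ CQ Q := by
    rw [hCQ]
    have hmem : B (m + 1) ^ 2 ≤ ∑ k ∈ Finset.range (m + 2), B k ^ 2 :=
      Finset.single_le_sum (fun i _ => sq_nonneg (B i)) (Finset.self_mem_range_succ (m + 1))
    have h1 : B (m + 1) ≤ Real.sqrt (∑ k ∈ Finset.range (m + 2), B k ^ 2) := by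
      calc B (m + 1) = Real.sqrt (B (m + 1) ^ 2) := (Real.sqrt_sq hbe.le).symm
        _ ≤ _ := Real.sqrt_le_sqrt hmem
    rw [le_inv_mul_iff₀ hbe, mul_one]
    exact h1
  rcases le_or_gt ‖x‖ 1 with h1 | h1
  · linarith
  have hlt : (derivative Q).natDegree < m + 1 := hm ▸ Polynomial.natDegree_derivative_lt hQ
  have he : (0 : Hq) = ∑ j ∈ Finset.range (m + 1), x ^ j * (Q.coeff (j + 1) * ((j : Hq) + 1)) := by
    rw [← hx, evalQ, Polynomial.sum_over_range' _ (fun n => mul_zero _) _ hlt]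
    refine Finset.sum_congr rfl fun j _ => ?_
    rw [Polynomial.coeff_derivative]
  rw [Finset.sum_range_succ] at he
  have heq : x ^ m * (Q.coeff (m + 1) * ((m : Hq) + 1))
      = -∑ j ∈ Finset.range m, x ^ j * (Q.coeff (j + 1) * ((j : Hq) + 1)) :=
    eq_neg_of_add_eq_zero_right he.symm
  have hnorm : ‖x‖ ^ m * (B (m + 1) * ((m : ℝ) + 1))
      ≤ ∑ j ∈ Finset.range m, ‖x‖ ^ j * (B (j + 1) * ((j : ℝ) + 1)) := by
    calc ‖x‖ ^ m * (B (m + 1) * ((m : ℝ) + 1))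
        = ‖x ^ m * (Q.coeff (m + 1) * ((m : Hq) + 1))‖ := by
          rw [norm_mul, norm_mul, norm_pow, norm_natCast_succ_Hq]
      _ = ‖∑ j ∈ Finset.range m, x ^ j * (Q.coeff (j + 1) * ((j : Hq) + 1))‖ := by
          rw [heq, norm_neg]
      _ ≤ ∑ j ∈ Finset.range m, ‖x ^ j * (Q.coeff (j + 1) * ((j : Hq) + 1))‖ :=
          norm_sum_le _ _
      _ = ∑ j ∈ Finset.range m, ‖x‖ ^ j * (B (j + 1) * ((j : ℝ) + 1)) := by
          refine Finset.sum_congr rfl fun j _ => ?_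
          rw [norm_mul, norm_mul, norm_pow, norm_natCast_succ_Hq]
  have hstep : ∑ j ∈ Finset.range m, ‖x‖ ^ j * (B (j + 1) * ((j : ℝ) + 1))
      ≤ ((m : ℝ) + 1) * ∑ j ∈ Finset.range m, ‖x‖ ^ j * B (j + 1) := by
    rw [Finset.mul_sum]
    refine Finset.sum_le_sum fun j hj => ?_
    have hjm : (j : ℝ) + 1 ≤ (m : ℝ) + 1 := by
      have := Finset.mem_range.mp hj
      have : (j : ℝ) ≤ (m : ℝ) := by exact_mod_cast this.le
      linarith
    have h0 : (0:ℝ) ≤ ‖x‖ ^ j * B (j + 1) := by positivity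
    nlinarith [h0, hjm]
  have hm1 : (0:ℝ) < (m : ℝ) + 1 := by positivity
  have hfinal : ‖x‖ ^ m * B (m + 1) ≤ ∑ j ∈ Finset.range m, ‖x‖ ^ j * B (j + 1) := by
    have h2 : ((m : ℝ) + 1) * (‖x‖ ^ m * B (m + 1))
        ≤ ((m : ℝ) + 1) * ∑ j ∈ Finset.range m, ‖x‖ ^ j * B (j + 1) := by
      calc ((m : ℝ) + 1) * (‖x‖ ^ m * B (m + 1))
          = ‖x‖ ^ m * (B (m + 1) * ((m : ℝ) + 1)) := by ring
        _ ≤ _ := le_trans hnorm hstep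
    exact le_of_mul_le_mul_left h2 hm1
  rw [hCQ]
  exact core m ‖x‖ B (fun k => norm_nonneg _) hbe h1 hfinal

lemma exists_sphere_plane (x : Hq) : ∃ I ∈ sphereS, x ∈ Cplane I := by
  by_cases him : x.im = 0
  · refine ⟨qi, ?_, x.re, 0, ?_⟩
    · show qi ^ 2 = -1
      rw [sq, Quaternion.ext_iff]
      refine ⟨?_, ?_, ?_, ?_⟩ <;>
        (simp only [Quaternion.re_mul, Quaternion.imI_mul, Quaternion.imJ_mul, Quaternion.imK_mul,
          Quaternion.re_neg, Quaternion.imI_neg, Quaternion.imJ_neg, Quaternion.imK_neg,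
          Quaternion.re_one, Quaternion.imI_one, Quaternion.imJ_one, Quaternion.imK_one]; simp [qi])
    · rw [zero_smul, add_zero, Quaternion.algebraMap_def]
      conv_lhs => rw [← Quaternion.re_add_im x, him, add_zero]
  · have hn : ‖x.im‖ ≠ 0 := norm_ne_zero_iff.mpr him
    refine ⟨‖x.im‖⁻¹ • x.im, ?_, x.re, ‖x.im‖, ?_⟩
    · show (‖x.im‖⁻¹ • x.im) ^ 2 = -1
      have hstar : star x.im = -x.im := by
        rw [Quaternion.star_eq_two_re_sub]
        simp
      have hC : x.im * x.im = -((Quaternion.normSq x.im : ℝ) : Hq) := by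
        have h := Quaternion.self_mul_star (a := x.im)
        rw [hstar, mul_neg] at h
        exact neg_eq_iff_eq_neg.mp h
      rw [sq, smul_mul_smul_comm, hC, Quaternion.normSq_eq_norm_mul_self, smul_neg,
        Quaternion.smul_coe]
      have h1 : ‖x.im‖⁻¹ * ‖x.im‖⁻¹ * (‖x.im‖ * ‖x.im‖) = 1 := by field_simp
      rw [h1]
      simp
    · rw [smul_smul, mul_inv_cancel₀ hn, one_smul, Quaternion.algebraMap_def,
        Quaternion.re_add_im]

theorem stmt18 (d : ℕ) (hd : 2 ≤ d) (P : Hq[X]) (hdeg : P.natDegree = d) :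
    ∀ x ∈ VQ (derivative P),
      ENNReal.ofReal ‖x‖ ≤ ⨆ I ∈ sphereS, CExt (projPoly I P) := by
  intro x hx
  obtain ⟨I, hI, hxI⟩ := exists_sphere_plane x
  have hroot : evalQ (derivative (projPoly I P)) x = 0 := by
    rw [derivative_projPoly, evalQ_projPoly hI hxI, hx, piProj_zero]
  have hle : CExt (projPoly I P) ≤ ⨆ I ∈ sphereS, CExt (projPoly I P) :=
    le_iSup₂ (f := fun I _ => CExt (projPoly I P)) I hI
  by_cases h0 : (projPoly I P).natDegree = 0
  · have hT : CExt (projPoly I P) = ⊤ := if_pos h0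
    exact le_trans le_top (hT ▸ hle)
  · have hb := root_bound (projPoly I P) h0 hroot
    have hE : CExt (projPoly I P) = ENNReal.ofReal (CQ (projPoly I P)) := if_neg h0
    calc ENNReal.ofReal ‖x‖ ≤ ENNReal.ofReal (CQ (projPoly I P)) := ENNReal.ofReal_le_ofReal hb
      _ = CExt (projPoly I P) := hE.symm
      _ ≤ _ := hle

end
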